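/- Let (W_n)_{n≥0} be an odometer based construction sequence with coefficient sequence (k_n) and limit K. Then: (1) every x ∈ K admits, for each n, a unique parsing into n-words, i.e. a unique integer a with −K_n < a ≤ 0 such that x↾[a + j·K_n, a + (j+1)·K_n) ∈ W_n for every j ∈ ℤ; and (2) writing r_n(x) = −a for this unique a, the map φ : K → O defined by φ(x)_n = (r_{n+1}(x) mod K_{n+1}) ∈ ZMod(K_{n+1}) takes values in the odometer O associated to (k_n) (its coordinates are compatible under the canonical projections) and satisfies φ(sh x) = T_O(φ(x)) for every x ∈ K, where sh is the shift map. Thus the odometer is canonically an equivariant image of K. -/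

import Mathlib

open MeasureTheory

namespace OdoPaper

/-- The shift map `sh` on bi-infinite sequences: `(sh x)(n) = x(n+1)`. -/
def shift {σ : Type*} (x : ℤ → σ) : ℤ → σ := fun m => x (m + 1)

/-- The `n`-th iterate (`n : ℤ`) of the shift map: `(shiftZ n x)(m) = x(m+n)`. -/
def shiftZ {σ : Type*} (n : ℤ) (x : ℤ → σ) : ℤ → σ := fun m => x (m + n)

/-- `Kseq k n = K_n`, where `K_0 = 1` and `K_{n+1} = K_n * k_n`. -/
def Kseq (k : ℕ → ℕ) : ℕ → ℕ
  | 0 => 1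
  | n + 1 => Kseq k n * k n

/-- Compatibility of a sequence `x` with `x n : ZMod (K_{n+1})` under the canonical
projections `ZMod (K_{n+2}) → ZMod (K_{n+1})`. -/
def odoCompat (k : ℕ → ℕ) (x : ∀ n : ℕ, ZMod (Kseq k (n + 1))) : Prop :=
  ∀ n : ℕ, ZMod.castHom (dvd_mul_right (Kseq k (n + 1)) (k (n + 1)))
      (ZMod (Kseq k (n + 1))) (x (n + 1)) = x n

/-- The odometer associated to the coefficient sequence `k`, as an additive subgroup of
`∏_n ZMod (K_{n+1})`. -/
def odometerSubgroup (k : ℕ → ℕ) : AddSubgroup (∀ n : ℕ, ZMod (Kseq k (n + 1))) where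
  carrier := { x | odoCompat k x }
  zero_mem' := by intro n; exact map_zero _
  add_mem' := by
    intro a b ha hb n; exact (map_add _ _ _).trans (congrArg₂ (· + ·) (ha n) (hb n))
  neg_mem' := by intro a ha n; exact (map_neg _ _).trans (congrArg Neg.neg (ha n))

/-- The odometer `O` associated to the coefficient sequence `k`. -/
abbrev Odometer (k : ℕ → ℕ) := ↥(odometerSubgroup k)

/-- The element `1̄ = (1 mod K_{n+1})_n` of the odometer. -/
def oneBar (k : ℕ → ℕ) : Odometer k := ⟨fun _ => 1, fun _ => map_one _⟩

/-- The odometer map `T_O` : translation by `1̄`. -/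
def odoMap (k : ℕ → ℕ) (x : Odometer k) : Odometer k := x + oneBar k

/-- Each factor `ZMod m` carries the discrete topology. -/
instance (n : ℕ) : TopologicalSpace (ZMod n) := ⊥
instance (n : ℕ) : DiscreteTopology (ZMod n) := ⟨rfl⟩
/-- Each factor `ZMod m` carries the discrete (Borel) σ-algebra; the product σ-algebra
on `∏_n ZMod (K_{n+1})` (and hence the subtype σ-algebra on the odometer) is then the
Borel σ-algebra of the product topology. -/
instance (n : ℕ) : MeasurableSpace (ZMod n) := ⊤
instance (n : ℕ) : DiscreteMeasurableSpace (ZMod n) := ⟨fun _ => trivial⟩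

/-- `w` occurs as a contiguous subword of `l` starting at position `p`. -/
def occursAt {σ : Type*} (w l : List σ) (p : ℕ) : Prop :=
  p + w.length ≤ l.length ∧ (l.drop p).take w.length = w

/-- The finite contiguous subword `x↾[a, a+m)` of `x : ℤ → σ`. -/
def subwordAt {σ : Type*} (x : ℤ → σ) (a : ℤ) (m : ℕ) : List σ :=
  List.ofFn (fun i : Fin m => x (a + i))

/-- The limit `K` of a construction sequence: all bi-infinite sequences each of whose finite
contiguous subwords occurs as a contiguous subword of some word in some `W n`. -/
def CSLimit {σ : Type*} (W : ℕ → Set (List σ)) : Set (ℤ → σ) :=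
  { x | ∀ (a : ℤ) (m : ℕ), ∃ n, ∃ w ∈ W n, ∃ p, occursAt (subwordAt x a m) w p }

/-- `(W_n)` is an odometer based construction sequence over the finite alphabet `σ` with
coefficient sequence `k`:  `W 0` consists of the one-letter words; every word of `W n` has
length `K_n`; every word of `W (n+1)` is a concatenation of `k n` words from `W n`; each
`W n` is uniquely readable; and every `n`-word occurs in every `(n+1)`-word. -/
structure OdometerBasedCS (σ : Type*) [Fintype σ] (k : ℕ → ℕ) (W : ℕ → Set (List σ)) :
    Prop where
  two_le : ∀ n, 2 ≤ k n
  w_zero : W 0 = { l : List σ | ∃ a : σ, l = [a] }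
  nonempty : ∀ n, (W n).Nonempty
  finite : ∀ n, (W n).Finite
  length_eq : ∀ n, ∀ w ∈ W n, w.length = Kseq k n
  concat : ∀ n, ∀ w' ∈ W (n + 1),
    ∃ g : Fin (k n) → List σ, (∀ i, g i ∈ W n) ∧ w' = (List.ofFn g).flatten
  unique_readable : ∀ n, ∀ u ∈ W n, ∀ v ∈ W n, ∀ w ∈ W n, ∀ p,
    occursAt w (u ++ v) p → p = 0 ∨ p = Kseq k n
  subword : ∀ n, ∀ w ∈ W n, ∀ w' ∈ W (n + 1), ∃ p, occursAt w w' p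

/-!
Unique readability pins down the phase of a parsing of `x` into `n`-words modulo `K_n`: two
parsings with phases `a ≤ a' < a + K_n` exhibit the `n`-word at `a'` inside the concatenation of
the two `n`-words at `a` and `a + K_n`. A parsing exists because every finite window of `x` sits
inside some `N`-word, which is a concatenation of `n`-words; this yields, for every window, a
phase among the finitely many values in `(-K_n, 0]` that parses the window, and a phase that
works for infinitely many windows parses all of `x`. Since an `(n+1)`-parsing is also an
`n`-parsing and shifting `x` lowers the phase by one, the residues `-a mod K_{n+1}` form a point
of the odometer on which the shift acts as `+1`.
-/

section Words

variable {σ : Type*}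

theorem length_subwordAt (x : ℤ → σ) (a : ℤ) (m : ℕ) : (subwordAt x a m).length = m := by
  simp [subwordAt]

theorem getElem?_subwordAt (x : ℤ → σ) (a : ℤ) {m i : ℕ} (h : i < m) :
    (subwordAt x a m)[i]? = some (x (a + i)) := by
  simp [subwordAt, h]

theorem subwordAt_add (x : ℤ → σ) (a : ℤ) (m₁ m₂ : ℕ) :
    subwordAt x a (m₁ + m₂) = subwordAt x a m₁ ++ subwordAt x (a + m₁) m₂ := by
  simp [subwordAt, List.ofFn_add, add_assoc]

theorem subwordAt_shift (x : ℤ → σ) (a : ℤ) (m : ℕ) :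
    subwordAt (shift x) a m = subwordAt x (a + 1) m := by
  simp only [subwordAt, shift, add_right_comm]

theorem occursAt_iff {w l : List σ} {p : ℕ} :
    occursAt w l p ↔ p + w.length ≤ l.length ∧ ∀ i < w.length, l[p + i]? = w[i]? := by
  refine and_congr_right fun hlen => ⟨fun h i hi => ?_, fun h => List.ext_getElem? fun i => ?_⟩
  · rw [← h, List.getElem?_take_of_lt hi, List.getElem?_drop]
  · rw [List.getElem?_take, List.getElem?_drop]
    split_ifs with hi
    · exact h i hi
    · rw [List.getElem?_eq_none (by omega)]

theorem occursAt_self (l : List σ) : occursAt l l 0 :=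
  occursAt_iff.2 ⟨by omega, by simp⟩

theorem occursAt.trans {u v w : List σ} {p q : ℕ} (h₁ : occursAt u v p)
    (h₂ : occursAt v w q) : occursAt u w (q + p) := by
  rw [occursAt_iff] at *
  refine ⟨by omega, fun i hi => ?_⟩
  rw [add_assoc, h₂.2 _ (by omega), h₁.2 i hi]

theorem occursAt_append_left {w l : List σ} {p : ℕ} (u : List σ) (h : occursAt w l p) :
    occursAt w (u ++ l) (u.length + p) := by
  rw [occursAt_iff] at *
  refine ⟨by simp; omega, fun i hi => ?_⟩
  rw [add_assoc, List.getElem?_append_right (by omega), Nat.add_sub_cancel_left, h.2 i hi]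

theorem occursAt_subwordAt (x : ℤ → σ) (a : ℤ) {p m m' : ℕ} (h : p + m ≤ m') :
    occursAt (subwordAt x (a + p) m) (subwordAt x a m') p := by
  refine occursAt_iff.2 ⟨by simpa [length_subwordAt] using h, fun i hi => ?_⟩
  rw [length_subwordAt] at hi
  rw [getElem?_subwordAt _ _ (by omega), getElem?_subwordAt _ _ hi]
  push_cast
  ring_nf

theorem length_flatten_of_forall_length_eq {L : List (List σ)} {K : ℕ}
    (hK : ∀ u ∈ L, u.length = K) : L.flatten.length = L.length * K := by
  simp [List.length_flatten, List.map_congr_left hK, List.map_const']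

theorem occursAt_getElem_flatten {L : List (List σ)} {K : ℕ} (hK : ∀ u ∈ L, u.length = K)
    {q : ℕ} (hq : q < L.length) : occursAt L[q] L.flatten (q * K) := by
  induction L generalizing q with
  | nil => simp at hq
  | cons u L ih =>
    cases q with
    | zero =>
      simpa using (occursAt_iff.2 ⟨by simp, fun i hi => by simp [List.getElem?_append_left hi]⟩ :
        occursAt u (u ++ L.flatten) 0)
    | succ q =>
      have h := occursAt_append_left u (ih (fun v hv => hK v (by simp [hv]))
        (Nat.lt_of_succ_lt_succ hq))
      rwa [hK u (by simp), ← one_add_mul, add_comm] at h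

theorem eq_subwordAt_of_occursAt {x : ℤ → σ} {c : ℤ} {m : ℕ} {w u : List σ} {p p' : ℕ}
    (hx : occursAt (subwordAt x c m) w p) (hu : occursAt u w p') (hpp' : p ≤ p')
    (hle : p' + u.length ≤ p + m) : u = subwordAt x (c - p + p') u.length := by
  rw [occursAt_iff, length_subwordAt] at hx
  refine List.ext_getElem? fun i => ?_
  by_cases hi : i < u.length
  · have hw := hx.2 (p' - p + i) (by omega)
    rw [getElem?_subwordAt _ _ (by omega), show p + (p' - p + i) = p' + i by omega,
      occursAt_iff.1 hu |>.2 i hi] at hw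
    rw [hw, getElem?_subwordAt _ _ hi]
    congr 2
    omega
  · rw [List.getElem?_eq_none (by omega), List.getElem?_eq_none (by simp [length_subwordAt]; omega)]

theorem subwordAt_eq_getElem_of_occursAt_flatten {x : ℤ → σ} {c : ℤ} {m K : ℕ}
    {L : List (List σ)} {p q : ℕ} (hK : ∀ u ∈ L, u.length = K)
    (hp : occursAt (subwordAt x c m) L.flatten p) (hq : q < L.length) (hpq : p ≤ q * K)
    (hqm : q * K + K ≤ p + m) : subwordAt x (c - p + (q * K : ℕ)) K = L[q] := by
  have hlen : L[q].length = K := hK _ (List.getElem_mem hq)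
  have := eq_subwordAt_of_occursAt hp (occursAt_getElem_flatten hK hq) hpq (by omega)
  rw [hlen] at this
  exact this.symm

end Words

theorem exists_add_mul_mem_Ioc (a : ℤ) {K : ℤ} (hK : 0 < K) :
    ∃ t : ℤ, -K < a + t * K ∧ a + t * K ≤ 0 := by
  have := Int.emod_add_ediv_mul (-a) K
  have := Int.emod_nonneg (-a) hK.ne'
  have := Int.emod_lt_of_pos (-a) hK
  exact ⟨(-a) / K, by linarith, by linarith⟩

section Parsing

variable {α : Type*} {k : ℕ → ℕ} {W : ℕ → Set (List α)}

theorem shift_mem_CSLimit {x : ℤ → α} (hx : x ∈ CSLimit W) : shift x ∈ CSLimit W := by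
  intro a m
  simpa only [subwordAt_shift] using hx (a + 1) m

def Parses (k : ℕ → ℕ) (W : ℕ → Set (List α)) (n : ℕ) (x : ℤ → α) (a : ℤ) : Prop :=
  ∀ j : ℤ, subwordAt x (a + j * Kseq k n) (Kseq k n) ∈ W n

theorem Parses.add_mul {n : ℕ} {x : ℤ → α} {a : ℤ} (h : Parses k W n x a) (t : ℤ) :
    Parses k W n x (a + t * Kseq k n) := fun j => by
  simpa only [add_assoc, ← _root_.add_mul] using h (t + j)

theorem Parses.shift {n : ℕ} {x : ℤ → α} {a : ℤ} (h : Parses k W n x a) :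
    Parses k W n (shift x) (a - 1) := fun j => by
  simpa only [subwordAt_shift, sub_add_cancel, sub_add_eq_add_sub] using h j

end Parsing

section ConstructionSequence

variable {α : Type*} [Fintype α] {k : ℕ → ℕ} {W : ℕ → Set (List α)}

theorem OdometerBasedCS.Kseq_pos (hW : OdometerBasedCS α k W) (n : ℕ) : 0 < Kseq k n := by
  induction n with
  | zero => simp [Kseq]
  | succ n ih => exact Nat.mul_pos ih (by linarith [hW.two_le n])

theorem OdometerBasedCS.exists_eq_flatten (hW : OdometerBasedCS α k W) {n N : ℕ} (hnN : n ≤ N)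
    {w : List α} (hw : w ∈ W N) : ∃ L : List (List α), (∀ u ∈ L, u ∈ W n) ∧ w = L.flatten := by
  induction N, hnN using Nat.le_induction generalizing w with
  | base => exact ⟨[w], by simpa using hw, by simp⟩
  | succ N _ ih =>
    obtain ⟨g, hg, rfl⟩ := hW.concat N w hw
    choose F hFW hF using fun i => ih (hg i)
    refine ⟨(List.ofFn F).flatten, ?_, ?_⟩
    · simp only [List.mem_flatten, List.mem_ofFn]
      rintro u ⟨_, ⟨i, rfl⟩, hu⟩
      exact hFW i u hu
    · rw [List.flatten_flatten, List.map_ofFn]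
      exact congrArg _ (congrArg _ (funext hF))

theorem OdometerBasedCS.exists_occursAt (hW : OdometerBasedCS α k W) {n N : ℕ} (hnN : n ≤ N)
    {w : List α} (hw : w ∈ W n) : ∃ w' ∈ W N, ∃ p, occursAt w w' p := by
  induction N, hnN using Nat.le_induction with
  | base => exact ⟨w, hw, 0, occursAt_self w⟩
  | succ N _ ih =>
    obtain ⟨w', hw', q, hq⟩ := ih
    obtain ⟨w'', hw''⟩ := hW.nonempty (N + 1)
    obtain ⟨p, hp⟩ := hW.subword N w' hw' w'' hw''
    exact ⟨w'', hw'', p + q, hq.trans hp⟩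

theorem OdometerBasedCS.exists_occursAt_flatten (hW : OdometerBasedCS α k W) {x : ℤ → α}
    (hx : x ∈ CSLimit W) (n : ℕ) (c : ℤ) (m : ℕ) :
    ∃ L : List (List α), (∀ u ∈ L, u ∈ W n) ∧ ∃ p, occursAt (subwordAt x c m) L.flatten p := by
  obtain ⟨N, w, hw, p, hp⟩ := hx c m
  obtain ⟨w', hw', q, hq⟩ := hW.exists_occursAt (le_max_right n N) hw
  obtain ⟨L, hL, rfl⟩ := hW.exists_eq_flatten (le_max_left n N) hw'
  exact ⟨L, hL, q + p, hp.trans hq⟩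

theorem Parses.eq_of_le_of_lt_add (hW : OdometerBasedCS α k W) {n : ℕ} {x : ℤ → α} {a a' : ℤ}
    (ha : Parses k W n x a) (ha' : Parses k W n x a') (hle : a ≤ a')
    (hlt : a' < a + Kseq k n) : a = a' := by
  obtain ⟨p, rfl⟩ : ∃ p : ℕ, a' = a + p := ⟨(a' - a).toNat, by omega⟩
  have hocc : occursAt (subwordAt x (a + p) (Kseq k n))
      (subwordAt x a (Kseq k n) ++ subwordAt x (a + Kseq k n) (Kseq k n)) p := by
    rw [← subwordAt_add]
    exact occursAt_subwordAt x a (by omega)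
  have := hW.unique_readable n _ (by simpa using ha 0) _ (by simpa using ha 1) _
    (by simpa using ha' 0) p hocc
  omega

theorem Parses.dvd_sub (hW : OdometerBasedCS α k W) {n : ℕ} {x : ℤ → α} {a a' : ℤ}
    (ha : Parses k W n x a) (ha' : Parses k W n x a') : (Kseq k n : ℤ) ∣ a' - a := by
  have hK : (0 : ℤ) < Kseq k n := by exact_mod_cast hW.Kseq_pos n
  have hdiv := Int.emod_add_ediv_mul (a' - a) (Kseq k n)
  have hr := ha.eq_of_le_of_lt_add hW (ha'.add_mul (-((a' - a) / Kseq k n)))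
    (by linarith [Int.emod_nonneg (a' - a) hK.ne'])
    (by linarith [Int.emod_lt_of_pos (a' - a) hK])
  exact Int.dvd_of_emod_eq_zero (by linarith)

theorem Parses.of_succ (hW : OdometerBasedCS α k W) {n : ℕ} {x : ℤ → α} {a : ℤ}
    (h : Parses k W (n + 1) x a) : Parses k W n x a := by
  intro s
  have hk : (0 : ℤ) < k n := by exact_mod_cast (by linarith [hW.two_le n] : 0 < k n)
  obtain ⟨r, hr⟩ : ∃ r : ℕ, (r : ℤ) = s % k n := ⟨(s % k n).toNat, by
    have := Int.emod_nonneg s hk.ne'; omega⟩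
  have hrk : r < k n := by have := Int.emod_lt_of_pos s hk; omega
  have hs := Int.emod_add_ediv_mul s (k n)
  obtain ⟨g, hg, hflat⟩ := hW.concat n _ (h (s / k n))
  have hlen : ∀ u ∈ List.ofFn g, u.length = Kseq k n := by
    simp only [List.mem_ofFn]
    rintro u ⟨i, rfl⟩
    exact hW.length_eq n _ (hg i)
  have hblock := subwordAt_eq_getElem_of_occursAt_flatten hlen
    (by rw [← hflat]; exact occursAt_self _) (by simpa using hrk) (Nat.zero_le _)
    (by rw [zero_add, ← Nat.succ_mul, mul_comm]; exact Nat.mul_le_mul_left _ hrk)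
  have hpos : a + s / k n * (Kseq k (n + 1) : ℤ) - (0 : ℕ) + (r * Kseq k n : ℕ)
      = a + s * Kseq k n := by
    simp only [Kseq, Nat.cast_mul, Nat.cast_zero, sub_zero, hr]
    linear_combination (Kseq k n : ℤ) * hs
  rw [hpos, List.getElem_ofFn] at hblock
  exact hblock ▸ hg _

theorem OdometerBasedCS.exists_parses_window (hW : OdometerBasedCS α k W) {x : ℤ → α}
    (hx : x ∈ CSLimit W) (n : ℕ) (c : ℤ) (m : ℕ) :
    ∃ a : ℤ, -(Kseq k n : ℤ) < a ∧ a ≤ 0 ∧ ∀ j : ℤ, c ≤ a + j * Kseq k n →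
      a + j * Kseq k n + Kseq k n ≤ c + m → subwordAt x (a + j * Kseq k n) (Kseq k n) ∈ W n := by
  obtain ⟨L, hLW, p, hp⟩ := hW.exists_occursAt_flatten hx n c m
  have hlen : ∀ u ∈ L, u.length = Kseq k n := fun u hu => hW.length_eq n u (hLW u hu)
  have hK := hW.Kseq_pos n
  obtain ⟨t, ht⟩ := exists_add_mul_mem_Ioc (c - p) (Int.natCast_pos.2 hK)
  refine ⟨c - p + t * Kseq k n, ht.1, ht.2, fun j hj hjm => ?_⟩
  obtain ⟨q, hq⟩ : ∃ q : ℕ, (q : ℤ) = t + j := ⟨(t + j).toNat, by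
    have : 0 ≤ (t + j) * Kseq k n := by rw [add_mul]; linarith [(p.cast_nonneg : (0 : ℤ) ≤ p)]
    have := nonneg_of_mul_nonneg_left this (Int.natCast_pos.2 hK); omega⟩
  have hqK : (q : ℤ) * Kseq k n = t * Kseq k n + j * Kseq k n := by rw [hq, add_mul]
  have hmL : p + m ≤ L.length * Kseq k n := by
    rw [← length_flatten_of_forall_length_eq hlen, ← length_subwordAt x c m]
    exact hp.1
  have hqm : q * Kseq k n + Kseq k n ≤ p + m := by zify; linarith
  have hqL : q < L.length := by
    rw [← Nat.succ_le_iff]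
    exact Nat.le_of_mul_le_mul_right (by rw [Nat.succ_mul]; omega) hK
  have hblock := subwordAt_eq_getElem_of_occursAt_flatten hlen hp hqL (by zify; linarith) hqm
  rw [Nat.cast_mul, hqK, ← add_assoc] at hblock
  exact hblock ▸ hLW _ (List.getElem_mem hqL)

theorem OdometerBasedCS.exists_parses (hW : OdometerBasedCS α k W) {x : ℤ → α}
    (hx : x ∈ CSLimit W) (n : ℕ) :
    ∃ a : ℤ, -(Kseq k n : ℤ) < a ∧ a ≤ 0 ∧ Parses k W n x a := by
  choose f hf using fun N : ℕ => hW.exists_parses_window hx n (-N) (2 * N)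
  let phaseOf : ℕ → Set.Ioc (-(Kseq k n : ℤ)) 0 := fun N => ⟨f N, (hf N).1, (hf N).2.1⟩
  obtain ⟨⟨a, ha⟩, hfiber⟩ := Finite.exists_infinite_fiber phaseOf
  refine ⟨a, ha.1, ha.2, fun j => ?_⟩
  obtain ⟨N, hN, hbig⟩ := (Set.infinite_coe_iff.1 hfiber).exists_gt
    ((a + j * Kseq k n).natAbs + (a + j * Kseq k n + Kseq k n).natAbs)
  obtain rfl : f N = a := congrArg Subtype.val hN
  exact (hf N).2.2 j (by omega) (by push_cast; omega)

end ConstructionSequence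

section Factor

variable {α : Type*} [Fintype α] {k : ℕ → ℕ} {W : ℕ → Set (List α)}

/-- `-a mod K_n` for the phase `a` of any parsing of `x` into `n`-words; junk if there is none. -/
noncomputable def phase (k : ℕ → ℕ) (W : ℕ → Set (List α)) (n : ℕ) (x : ℤ → α) :
    ZMod (Kseq k n) :=
  ((-Classical.epsilon (Parses k W n x) : ℤ) : ZMod (Kseq k n))

theorem phase_eq (hW : OdometerBasedCS α k W) {n : ℕ} {x : ℤ → α} {a : ℤ}
    (h : Parses k W n x a) : phase k W n x = ((-a : ℤ) : ZMod (Kseq k n)) := by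
  rw [phase, ZMod.intCast_eq_intCast_iff_dvd_sub, neg_sub_neg]
  exact h.dvd_sub hW (Classical.epsilon_spec ⟨a, h⟩)

theorem castHom_phase_succ (hW : OdometerBasedCS α k W) {n : ℕ} {x : ℤ → α} {a : ℤ}
    (h : Parses k W (n + 1) x a) :
    ZMod.castHom (dvd_mul_right (Kseq k n) (k n)) (ZMod (Kseq k n)) (phase k W (n + 1) x)
      = phase k W n x := by
  rw [phase_eq hW (h.of_succ hW), phase_eq hW h]
  exact map_intCast _ _

theorem phase_shift (hW : OdometerBasedCS α k W) {n : ℕ} {x : ℤ → α} {a : ℤ}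
    (h : Parses k W n x a) : phase k W n (shift x) = phase k W n x + 1 := by
  rw [phase_eq hW h, phase_eq hW h.shift]
  push_cast
  ring

open Classical in
noncomputable def toOdometer (hW : OdometerBasedCS α k W) (x : ℤ → α) : Odometer k :=
  if hx : x ∈ CSLimit W then
    ⟨fun n => phase k W (n + 1) x,
      fun n => castHom_phase_succ hW (hW.exists_parses hx (n + 2)).choose_spec.2.2⟩
  else 0

theorem toOdometer_coe_apply (hW : OdometerBasedCS α k W) {x : ℤ → α} (hx : x ∈ CSLimit W)
    (n : ℕ) : (toOdometer hW x).1 n = phase k W (n + 1) x := by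
  rw [toOdometer, dif_pos hx]

theorem toOdometer_apply (hW : OdometerBasedCS α k W) {x : ℤ → α} (hx : x ∈ CSLimit W)
    {n : ℕ} {a : ℤ} (h : Parses k W (n + 1) x a) :
    (toOdometer hW x).1 n = ((-a : ℤ) : ZMod (Kseq k (n + 1))) :=
  (toOdometer_coe_apply hW hx n).trans (phase_eq hW h)

theorem toOdometer_shift (hW : OdometerBasedCS α k W) {x : ℤ → α} (hx : x ∈ CSLimit W) :
    toOdometer hW (shift x) = odoMap k (toOdometer hW x) := by
  refine Subtype.ext (funext fun n => ?_)
  obtain ⟨a, -, -, ha⟩ := hW.exists_parses hx (n + 1)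
  rw [toOdometer_coe_apply hW (shift_mem_CSLimit hx), phase_shift hW ha,
    ← toOdometer_coe_apply hW hx]
  rfl

end Factor

/-- every element of the limit of an odometer based construction sequence
admits, for each `n`, a unique parsing into `n`-words (a unique offset `a` with
`-K_n < a ≤ 0` such that all the blocks `x↾[a+jK_n, a+(j+1)K_n)` are `n`-words), and the
map `φ : K → O`, `φ(x)_n = r_{n+1}(x) mod K_{n+1}` (where `r_{n+1}(x) = -a` for the level
`n+1` offset `a`), takes values in the odometer and intertwines the shift with `T_O`. -/
theorem unique_parsing_and_canonical_odometer_factor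
    {α : Type} [Fintype α] (k : ℕ → ℕ) (W : ℕ → Set (List α))
    (hW : OdometerBasedCS α k W) :
    (∀ x ∈ CSLimit W, ∀ n : ℕ, ∃! a : ℤ,
        -(Kseq k n : ℤ) < a ∧ a ≤ 0 ∧
        ∀ j : ℤ, subwordAt x (a + j * (Kseq k n : ℤ)) (Kseq k n) ∈ W n) ∧
    ∃ φ : (ℤ → α) → Odometer k,
      (∀ x ∈ CSLimit W, ∀ n : ℕ, ∀ a : ℤ,
          (-(Kseq k (n + 1) : ℤ) < a ∧ a ≤ 0 ∧
            ∀ j : ℤ, subwordAt x (a + j * (Kseq k (n + 1) : ℤ)) (Kseq k (n + 1)) ∈ W (n + 1)) →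
          (φ x).1 n = ((-a : ℤ) : ZMod (Kseq k (n + 1)))) ∧
      ∀ x ∈ CSLimit W, φ (shift x) = odoMap k (φ x) := by
  refine ⟨fun x hx n => ?_, toOdometer hW, fun x hx n a ha => toOdometer_apply hW hx ha.2.2,
    fun x hx => toOdometer_shift hW hx⟩
  obtain ⟨a, ha⟩ := hW.exists_parses hx n
  refine ⟨a, ha, fun b hb => ?_⟩
  rcases le_total a b with hab | hab
  · exact (Parses.eq_of_le_of_lt_add hW ha.2.2 hb.2.2 hab (by linarith [ha.1, hb.2.1])).symm
  · exact Parses.eq_of_le_of_lt_add hW hb.2.2 ha.2.2 hab (by linarith [hb.1, ha.2.1])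

end OdoPaper
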